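/- Let n ≥ 2 and let f : 𝔽₂ⁿ → 𝔽₂ be a nested canalizing function written in layered form f = M₁(M₂(⋯(M_{r−1}(M_r ⊕ 1) ⊕ 1)⋯) ⊕ 1) ⊕ b with layer sizes k₁,…,k_r. Then every variable belonging to the l-th layer M_l (for 1 ≤ l ≤ r) has the same activity, equal to A_l^f = (1/2^{n−1}) · Σ_{j=1}^{r−l+1} (−1)^{j−1} · 2^{n − (k₁+⋯+k_{j+l−1})}. -/

import Mathlib

/-!
Flipping `x i` for `i` in layer `l` changes `f` exactly when every factor `x j ⊕ a j` of the
layers before `l`, and every other factor of layer `l`, equals `1`, and the inner expression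
`M_{l+1}(⋯) ⊕ 1` equals `1`. These two events involve disjoint sets of variables, so the
activity is `2 ^ (1 - K_{l+1})` times the density `P_{l+1}` of the second event, where `K_m` is
the number of variables in the first `m` layers. The densities satisfy
`P_m = 1 - 2 ^ (-k_m) P_{m+1}` with `P_r = 1`, which unrolls into the alternating sum.
-/


/-- `f` is nested canalizing in the variable order `σ(0), σ(1), …, σ(n-1)`
with canalizing input values `a` and canalized output values `b`:
`f x = b k` whenever `x (σ j) = a j + 1` for all `j < k` and `x (σ k) = a k`,
and `f x = b (last) + 1` whenever `x (σ j) = a j + 1` for all `j`. -/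
def IsNCF {n : ℕ} (f : (Fin n → ZMod 2) → ZMod 2) (σ : Equiv.Perm (Fin n))
    (a b : Fin n → ZMod 2) : Prop :=
  (∀ (k : Fin n) (x : Fin n → ZMod 2),
      (∀ j : Fin n, j < k → x (σ j) = a j + 1) → x (σ k) = a k → f x = b k) ∧
  (∀ k : Fin n, (∀ j : Fin n, j ≤ k) →
      ∀ x : Fin n → ZMod 2, (∀ j : Fin n, x (σ j) = a j + 1) → f x = b k + 1)

/-- The nested expression `M i * (M (i+1) * ( … * (M (i+t-1) + 1) … ) + 1)`
with `t` factors, i.e. `nestVal M t i = Mᵢ(M_{i+1}(⋯(M_{i+t-1} ⊕ 1)⋯) ⊕ 1)`. -/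
def nestVal (M : ℕ → ZMod 2) : ℕ → ℕ → ZMod 2
  | 0, _ => 0
  | 1, i => M i
  | (t + 2), i => M i * (nestVal M (t + 1) (i + 1) + 1)

/-- The extended monomial of the `i`-th layer, given the layer assignment `L`
and the complemented inputs `a`:  `Mᵢ(x) = ∏_{L j = i} (x j ⊕ a j)`. -/
def layerMon {n r : ℕ} (L : Fin n → Fin r) (a : Fin n → ZMod 2) (i : ℕ)
    (x : Fin n → ZMod 2) : ZMod 2 :=
  ∏ j ∈ Finset.univ.filter (fun j : Fin n => (L j : ℕ) = i), (x j + a j)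

/-- `kᵢ`, the number of variables in the `i`-th layer. -/
def layerSize {n r : ℕ} (L : Fin n → Fin r) (i : ℕ) : ℕ :=
  (Finset.univ.filter (fun j : Fin n => (L j : ℕ) = i)).card

/-- `K_l = k₀ + k₁ + ⋯ + k_{l-1}`, the number of variables in the first `l` layers. -/
def layerSum {n r : ℕ} (L : Fin n → Fin r) (l : ℕ) : ℕ :=
  ∑ i ∈ Finset.range l, layerSize L i

/-- `f` is given in the layered form
`f = M₁(M₂(⋯(M_{r−1}(M_r ⊕ 1) ⊕ 1)⋯) ⊕ 1) ⊕ b`, where the `Mᵢ` are extended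
monomials in pairwise disjoint sets of variables comprising all `n` variables
(the variable set of `Mᵢ` being the `i`-th layer `{j | L j = i}`), every layer
is nonempty, and the last layer has at least two variables. -/
def IsLayeredForm {n r : ℕ} (f : (Fin n → ZMod 2) → ZMod 2)
    (L : Fin n → Fin r) (a : Fin n → ZMod 2) (b : ZMod 2) : Prop :=
  1 ≤ r ∧
  (∀ i : Fin r, 1 ≤ layerSize L (i : ℕ)) ∧
  2 ≤ layerSize L (r - 1) ∧
  ∀ x : Fin n → ZMod 2, f x = nestVal (fun i => layerMon L a i x) r 0 + b

/-- The activity `λᵢᶠ = 2⁻ⁿ ∑_x (f(x with xᵢ flipped) ⊕ f(x))`, the Boolean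
difference being regarded as the integer 0 or 1. -/
def activity {n : ℕ} (f : (Fin n → ZMod 2) → ZMod 2) (i : Fin n) : ℚ :=
  (1 / 2 ^ n) * ∑ x : Fin n → ZMod 2,
    ((f (Function.update x i (x i + 1)) + f x).val : ℚ)

/-- The average sensitivity `sᶠ = ∑ᵢ λᵢᶠ`. -/
def avgSens {n : ℕ} (f : (Fin n → ZMod 2) → ZMod 2) : ℚ :=
  ∑ i : Fin n, activity f i

open Finset Function

noncomputable def bitVal : ZMod 2 →*₀ ℚ where
  toFun z := z.val
  map_zero' := by simp
  map_one' := by simp [ZMod.val_one]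
  map_mul' u v := by
    have : (u * v).val = u.val * v.val := by revert u v; decide
    simp only [this, Nat.cast_mul]

lemma bitVal_add_one (u : ZMod 2) : bitVal (u + 1) = 1 - bitVal u := by
  have : (u + 1).val + u.val = 1 := by revert u; decide
  change ((u + 1).val : ℚ) = 1 - u.val
  rw [eq_sub_iff_add_eq]
  exact_mod_cast this

section Flip

variable {ι : Type*} [DecidableEq ι]

lemma involutive_update_add_one (j : ι) :
    Involutive fun x : ι → ZMod 2 => update x j (x j + 1) := by
  intro x
  ext k
  rcases eq_or_ne k j with rfl | hk
  · simp [add_assoc, show (1 + 1 : ZMod 2) = 0 from rfl]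
  · simp [hk]

variable [Fintype ι]

lemma two_mul_sum_bitVal_mul (j : ι) (c : ZMod 2) (F : (ι → ZMod 2) → ℚ)
    (hF : ∀ x, F (update x j (x j + 1)) = F x) :
    2 * ∑ x, bitVal (x j + c) * F x = ∑ x, F x := by
  have hflip : ∑ x, bitVal (x j + c) * F x = ∑ x, bitVal (x j + c + 1) * F x := by
    rw [← Equiv.sum_comp (involutive_update_add_one j).toPerm]
    simp [hF, add_right_comm]
  calc 2 * ∑ x, bitVal (x j + c) * F x
      = ∑ x, (bitVal (x j + c) + bitVal (x j + c + 1)) * F x := by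
        rw [two_mul]; nth_rw 2 [hflip]; rw [← sum_add_distrib]; simp only [add_mul]
    _ = ∑ x, F x := by simp [bitVal_add_one]

lemma two_pow_card_mul_sum_prod_bitVal_mul (S : Finset ι) (c : ι → ZMod 2)
    (h : (ι → ZMod 2) → ℚ) (hh : ∀ j ∈ S, ∀ x, h (update x j (x j + 1)) = h x) :
    2 ^ #S * ∑ x, (∏ j ∈ S, bitVal (x j + c j)) * h x = ∑ x, h x := by
  induction S using Finset.induction_on with
  | empty => simp
  | insert j S hj ih =>
    rw [card_insert_of_notMem hj, pow_succ, mul_assoc,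
      ← ih fun k hk => hh k (mem_insert_of_mem hk)]
    congr 1
    simp only [prod_insert hj, mul_assoc]
    refine two_mul_sum_bitVal_mul j (c j) _ fun x => ?_
    rw [hh j (mem_insert_self j S) x]
    congr 1
    exact prod_congr rfl fun k hk => by rw [update_of_ne (ne_of_mem_of_not_mem hk hj)]

end Flip

lemma nestVal_succ (M : ℕ → ZMod 2) (t i : ℕ) :
    nestVal M (t + 1) i = M i * (nestVal M t (i + 1) + 1) := by
  cases t with
  | zero => simp [nestVal]
  | succ t => rfl

lemma nestVal_congr {M M' : ℕ → ZMod 2} {i : ℕ} (hM : ∀ q, i ≤ q → M q = M' q)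
    (t : ℕ) :
    nestVal M t i = nestVal M' t i := by
  induction t generalizing i with
  | zero => rfl
  | succ t ih =>
    rw [nestVal_succ, nestVal_succ, hM i le_rfl, ih fun q hq => hM q (by omega)]

section Layers

variable {n r : ℕ} (L : Fin n → Fin r) (a : Fin n → ZMod 2)

/-- `layerNest L a m` is `M_m(M_{m+1}(⋯(M_{r-1} ⊕ 1)⋯) ⊕ 1)`, so that
`f = layerNest L a 0 ⊕ b`. -/
def layerNest (m : ℕ) (x : Fin n → ZMod 2) : ZMod 2 :=
  nestVal (fun q => layerMon L a q x) (r - m) m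

lemma layerNest_self (x : Fin n → ZMod 2) : layerNest L a r x = 0 := by
  simp [layerNest, nestVal]

lemma layerNest_of_lt {m : ℕ} (hm : m < r) (x : Fin n → ZMod 2) :
    layerNest L a m x = layerMon L a m x * (layerNest L a (m + 1) x + 1) := by
  rw [layerNest, show r - m = r - (m + 1) + 1 by omega, nestVal_succ]
  rfl

variable {L a}

lemma layerMon_congr {q : ℕ} {x y : Fin n → ZMod 2}
    (hxy : ∀ j, (L j : ℕ) = q → x j = y j) :
    layerMon L a q x = layerMon L a q y :=
  prod_congr rfl fun j hj => by rw [hxy j (mem_filter.1 hj).2]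

lemma layerNest_congr {m : ℕ} {x y : Fin n → ZMod 2}
    (hxy : ∀ j, m ≤ (L j : ℕ) → x j = y j) :
    layerNest L a m x = layerNest L a m y :=
  nestVal_congr (fun _ hq => layerMon_congr fun j hj => hxy j (hj ▸ hq)) _

lemma layerNest_update_of_lt {m : ℕ} {j : Fin n} (hj : (L j : ℕ) < m) (x : Fin n → ZMod 2)
    (v : ZMod 2) : layerNest L a m (update x j v) = layerNest L a m x :=
  layerNest_congr fun k hk => update_of_ne (by rintro rfl; omega) _ _

variable (L a)

lemma prod_layerMon_range (m : ℕ) (x : Fin n → ZMod 2) :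
    ∏ q ∈ range m, layerMon L a q x = ∏ j with (L j : ℕ) < m, (x j + a j) := by
  simp only [layerMon, prod_fiberwise_eq_prod_filter, mem_range]

lemma card_filter_lt_eq_layerSum (m : ℕ) : #{j | (L j : ℕ) < m} = layerSum L m := by
  simp only [layerSum, layerSize, card_eq_sum_ones, sum_fiberwise_eq_sum_filter, mem_range]

lemma layerSum_le (m : ℕ) : layerSum L m ≤ n :=
  card_filter_lt_eq_layerSum L m ▸ (card_le_univ _).trans_eq (Fintype.card_fin n)

lemma sum_bitVal_layerNest_add_one {m : ℕ} (hm : m ≤ r) :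
    ∑ x, bitVal (layerNest L a m x + 1) =
      2 ^ n * 2 ^ layerSum L m *
        ∑ j ∈ range (r - m + 1), (-1 : ℚ) ^ j / 2 ^ layerSum L (m + j) := by
  induction hm using Nat.decreasingInduction with
  | self =>
    simp [layerNest_self]
  | of_succ m hm ih =>
    set P := ∑ j ∈ range (r - (m + 1) + 1), (-1 : ℚ) ^ j / 2 ^ layerSum L (m + 1 + j)
    have hsplit : ∀ x, bitVal (layerNest L a m x + 1) =
        1 - (∏ j with (L j : ℕ) = m, bitVal (x j + a j)) *
          bitVal (layerNest L a (m + 1) x + 1) := fun x => by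
      rw [layerNest_of_lt L a hm, bitVal_add_one, map_mul, layerMon, map_prod]
    have hfactor := two_pow_card_mul_sum_prod_bitVal_mul {j | (L j : ℕ) = m} a
      (fun x => bitVal (layerNest L a (m + 1) x + 1)) fun j hj x => by
        rw [layerNest_update_of_lt (by rw [(mem_filter.1 hj).2]; omega)]
    have hK : layerSum L (m + 1) = layerSum L m + #{j | (L j : ℕ) = m} := sum_range_succ _ _
    have hP : ∑ j ∈ range (r - m + 1), (-1 : ℚ) ^ j / 2 ^ layerSum L (m + j) =
        1 / 2 ^ layerSum L m - P := by
      have hterm : ∀ j, (-1 : ℚ) ^ (j + 1) / 2 ^ layerSum L (m + (j + 1)) =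
          -((-1) ^ j / 2 ^ layerSum L (m + 1 + j)) := fun j => by
        rw [show m + (j + 1) = m + 1 + j by omega, pow_succ]
        ring
      rw [show r - m + 1 = r - (m + 1) + 1 + 1 by omega, sum_range_succ']
      simp only [hterm, sum_neg_distrib, add_zero, pow_zero]
      ring
    simp only [hsplit, sum_sub_distrib, sum_const, card_univ, Fintype.card_fun, ZMod.card,
      Fintype.card_fin, nsmul_eq_mul, mul_one, Nat.cast_pow, Nat.cast_ofNat]
    rw [hP]
    rw [ih, hK, pow_add] at hfactor
    have hX := mul_left_cancel₀ (by positivity : (2 : ℚ) ^ #{j | (L j : ℕ) = m} ≠ 0)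
      (hfactor.trans (by ring : _ = 2 ^ #{j | (L j : ℕ) = m} * (2 ^ n * 2 ^ layerSum L m * P)))
    rw [hX]
    field_simp

lemma layerNest_add_of_eq_of_ne {l : ℕ} (hl : l < r) {x x' : Fin n → ZMod 2}
    (hx : ∀ j, (L j : ℕ) ≠ l → x' j = x j) {m : ℕ} (hm : m ≤ l) :
    layerNest L a m x' + layerNest L a m x =
      (∏ q ∈ Ico m l, layerMon L a q x) * (layerMon L a l x' + layerMon L a l x) *
        (layerNest L a (l + 1) x + 1) := by
  induction hm using Nat.decreasingInduction with
  | self =>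
    rw [layerNest_of_lt L a hl, layerNest_of_lt L a hl,
      layerNest_congr fun j hj => hx j (by omega), Ico_self, prod_empty]
    ring
  | of_succ m hm ih =>
    have hsum : ∀ c u v : ZMod 2, c * (u + 1) + c * (v + 1) = c * (u + v) := by decide
    rw [layerNest_of_lt L a (hm.trans hl), layerNest_of_lt L a (hm.trans hl),
      layerMon_congr fun j hj => hx j (by omega), hsum, ih, prod_eq_prod_Ico_succ_bot hm]
    ring

lemma layerMon_update_add {i : Fin n} {l : ℕ} (hi : (L i : ℕ) = l) (x : Fin n → ZMod 2) :
    layerMon L a l (update x i (x i + 1)) + layerMon L a l x =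
      ∏ j ∈ ({j | (L j : ℕ) = l} : Finset (Fin n)).erase i, (x j + a j) := by
  have hiT : i ∈ ({j | (L j : ℕ) = l} : Finset (Fin n)) := by simp [hi]
  have hrest : ∏ j ∈ ({j | (L j : ℕ) = l} : Finset (Fin n)).erase i,
      (update x i (x i + 1) j + a j) = ∏ j ∈ ({j | (L j : ℕ) = l} : Finset (Fin n)).erase i,
      (x j + a j) :=
    prod_congr rfl fun j hj => by rw [update_of_ne (ne_of_mem_erase hj)]
  have hflip : ∀ u c P : ZMod 2, (u + 1 + c) * P + (u + c) * P = P := by decide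
  rw [layerMon, layerMon, ← mul_prod_erase _ _ hiT, ← mul_prod_erase _ _ hiT, update_self,
    hrest, hflip]

/-- The variables other than `i` whose factor `x j ⊕ a j` must be `1` for flipping `x i` to change
`f`: those of the layers before `i`'s and the rest of `i`'s layer. -/
def precedingVars (i : Fin n) : Finset (Fin n) :=
  ({j | (L j : ℕ) < L i} : Finset (Fin n)) ∪ ({j | (L j : ℕ) = L i} : Finset (Fin n)).erase i

variable {L}

lemma disjoint_precedingVars (i : Fin n) :
    Disjoint ({j | (L j : ℕ) < L i} : Finset (Fin n))
      (({j | (L j : ℕ) = L i} : Finset (Fin n)).erase i) :=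
  disjoint_left.2 fun j hj hj' => by
    simp only [mem_filter, mem_erase] at hj hj'
    omega

lemma le_of_mem_precedingVars {i j : Fin n} (hj : j ∈ precedingVars L i) :
    (L j : ℕ) ≤ L i := by
  simp only [precedingVars, mem_union, mem_filter, mem_erase] at hj
  omega

lemma card_precedingVars_add_one (i : Fin n) : #(precedingVars L i) + 1 = layerSum L (L i + 1) := by
  have hi : i ∈ ({j | (L j : ℕ) = L i} : Finset (Fin n)) := by simp
  have := card_pos.2 ⟨i, hi⟩
  have hK : layerSum L (L i + 1) = layerSum L (L i) + #{j | (L j : ℕ) = L i} := sum_range_succ _ _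
  rw [precedingVars, card_union_of_disjoint (disjoint_precedingVars i), card_erase_of_mem hi,
    card_filter_lt_eq_layerSum]
  omega

end Layers

lemma add_update_of_isLayeredForm {n r : ℕ} {f : (Fin n → ZMod 2) → ZMod 2}
    {L : Fin n → Fin r} {a : Fin n → ZMod 2} {b : ZMod 2} (h : IsLayeredForm f L a b)
    (i : Fin n) (x : Fin n → ZMod 2) :
    f (update x i (x i + 1)) + f x =
      (∏ j ∈ precedingVars L i, (x j + a j)) * (layerNest L a (L i + 1) x + 1) := by
  have hf : ∀ x, f x = layerNest L a 0 x + b := h.2.2.2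
  have hx : ∀ j, (L j : ℕ) ≠ L i → update x i (x i + 1) j = x j := fun j hj =>
    update_of_ne (by rintro rfl; exact hj rfl) _ _
  rw [hf, hf, add_add_add_comm, CharTwo.add_self_eq_zero, add_zero,
    layerNest_add_of_eq_of_ne L a (L i).2 hx (Nat.zero_le _), ← range_eq_Ico,
    prod_layerMon_range, layerMon_update_add L a rfl, precedingVars,
    prod_union (disjoint_precedingVars i)]

theorem activity_eq_of_isLayeredForm {n r : ℕ} {f : (Fin n → ZMod 2) → ZMod 2}
    {L : Fin n → Fin r} {a : Fin n → ZMod 2} {b : ZMod 2} (h : IsLayeredForm f L a b)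
    (i : Fin n) :
    activity f i =
      2 * ∑ j ∈ range (r - L i), (-1 : ℚ) ^ j / 2 ^ layerSum L (L i + 1 + j) := by
  set P := ∑ j ∈ range (r - L i), (-1 : ℚ) ^ j / 2 ^ layerSum L (L i + 1 + j)
  have hfactor := two_pow_card_mul_sum_prod_bitVal_mul (precedingVars L i) a
    (fun x => bitVal (layerNest L a (L i + 1) x + 1)) fun j hj x => by
      rw [layerNest_update_of_lt (Nat.lt_succ_of_le (le_of_mem_precedingVars hj))]
  rw [sum_bitVal_layerNest_add_one L a (L i).2, ← card_precedingVars_add_one,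
    show r - (L i + 1) + 1 = r - L i by omega, pow_succ] at hfactor
  have hsum := mul_left_cancel₀ (by positivity : (2 : ℚ) ^ #(precedingVars L i) ≠ 0)
    (hfactor.trans (by ring : _ = (2 : ℚ) ^ #(precedingVars L i) * (2 ^ n * 2 * P)))
  simp only [activity, show ∀ z : ZMod 2, (z.val : ℚ) = bitVal z from fun _ => rfl,
    add_update_of_isLayeredForm h, map_mul, map_prod, hsum]
  field_simp

/-- Layers are indexed from `0` here, so the layer `l` is the paper's layer `l + 1`. -/
theorem statement13_general {n r : ℕ} (f : (Fin n → ZMod 2) → ZMod 2)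
    (L : Fin n → Fin r) (a : Fin n → ZMod 2) (b : ZMod 2)
    (h : IsLayeredForm f L a b) (l : Fin r) (i : Fin n) (hi : L i = l) :
    activity f i = (1 / 2 ^ (n - 1)) *
      ∑ j ∈ Finset.range (r - (l : ℕ)),
        (-1 : ℚ) ^ j * 2 ^ (n - layerSum L (j + (l : ℕ) + 1)) := by
  rw [activity_eq_of_isLayeredForm h i, hi, mul_sum, mul_sum]
  refine sum_congr rfl fun j _ => ?_
  rw [show (l : ℕ) + 1 + j = j + l + 1 by omega, pow_sub₀ _ two_ne_zero (layerSum_le L _),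
    pow_sub₀ _ two_ne_zero i.pos, pow_one]
  field_simp

/-- Every variable in the `l`-th layer of a nested canalizing function in
layered form has the same activity
`A_l = 2^{-(n−1)} Σ_{j=1}^{r−l+1} (−1)^{j−1} 2^{n−(k₁+⋯+k_{j+l−1})}`
(here layers are indexed from 0, so the 0-indexed layer `l` corresponds to
the paper's layer `l+1`). -/
theorem statement13 {n r : ℕ} (hn : 2 ≤ n) (f : (Fin n → ZMod 2) → ZMod 2)
    (L : Fin n → Fin r) (a : Fin n → ZMod 2) (b : ZMod 2)
    (h : IsLayeredForm f L a b) (l : Fin r) (i : Fin n) (hi : L i = l) :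
    activity f i = (1 / 2 ^ (n - 1)) *
      ∑ j ∈ Finset.range (r - (l : ℕ)),
        (-1 : ℚ) ^ j * 2 ^ (n - layerSum L (j + (l : ℕ) + 1)) :=
  statement13_general f L a b h l i hi
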